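/- For every n ≥ 1, there is a bijection between the set of indecomposable noncrossing nonnesting partitions of {1,...,n} and the set of indecomposable permutations of {1,...,n} avoiding 321 and 3412; in particular these two sets have the same cardinality. -/

import Mathlib

/-- `i` and `j` lie in the same block of the set partition `P`. -/
def SameBlock {n : ℕ} (P : Finpartition (Finset.univ : Finset (Fin n)))
    (i j : Fin n) : Prop :=
  ∃ b ∈ P.parts, i ∈ b ∧ j ∈ b

/-- `(i, j)` is an arc of the arc diagram of `P`: `i < j` are in the same block
and no element strictly between them lies in that block. -/
def IsArc {n : ℕ} (P : Finpartition (Finset.univ : Finset (Fin n)))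
    (i j : Fin n) : Prop :=
  i < j ∧ SameBlock P i j ∧ ∀ m : Fin n, i < m → m < j → ¬ SameBlock P i m

/-- `P` is noncrossing: no two arcs `(i₁,j₁)`, `(i₂,j₂)` with `i₁<i₂<j₁<j₂`. -/
def Noncrossing {n : ℕ} (P : Finpartition (Finset.univ : Finset (Fin n))) : Prop :=
  ¬ ∃ i₁ j₁ i₂ j₂ : Fin n, IsArc P i₁ j₁ ∧ IsArc P i₂ j₂ ∧
      i₁ < i₂ ∧ i₂ < j₁ ∧ j₁ < j₂

/-- `P` is nonnesting: no two arcs `(i₁,j₁)`, `(i₂,j₂)` with `i₁<i₂<j₂<j₁`. -/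
def Nonnesting {n : ℕ} (P : Finpartition (Finset.univ : Finset (Fin n))) : Prop :=
  ¬ ∃ i₁ j₁ i₂ j₂ : Fin n, IsArc P i₁ j₁ ∧ IsArc P i₂ j₂ ∧
      i₁ < i₂ ∧ i₂ < j₂ ∧ j₂ < j₁

/-- `P` is indecomposable: no proper nonempty subcollection of its blocks forms
a partition of an initial segment `{1,...,k}` with `k < n`; equivalently, for
no `0 < k < n` is every block entirely inside the first `k` elements or
entirely outside them. -/
def IndecomposableP {n : ℕ} (P : Finpartition (Finset.univ : Finset (Fin n))) : Prop :=
  ¬ ∃ k : ℕ, 0 < k ∧ k < n ∧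
      ∀ b ∈ P.parts, (∀ i ∈ b, (i : ℕ) < k) ∨ (∀ i ∈ b, k ≤ (i : ℕ))

/-- `σ` avoids the pattern 321: no indices `i < j < k` with `σ i > σ j > σ k`. -/
def Avoids321 {n : ℕ} (σ : Equiv.Perm (Fin n)) : Prop :=
  ¬ ∃ i j k : Fin n, i < j ∧ j < k ∧ σ k < σ j ∧ σ j < σ i

/-- `σ` avoids the pattern 3412: no indices `i < j < k < l` with
`σ k < σ l < σ i < σ j`. -/
def Avoids3412 {n : ℕ} (σ : Equiv.Perm (Fin n)) : Prop :=
  ¬ ∃ i j k l : Fin n, i < j ∧ j < k ∧ k < l ∧ σ k < σ l ∧ σ l < σ i ∧ σ i < σ j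

/-- `σ` is indecomposable: it is not a direct sum of two nonempty permutations,
i.e. no `0 < k < n` with `σ({1,...,k}) = {1,...,k}`. -/
def IndecomposableSigma {n : ℕ} (σ : Equiv.Perm (Fin n)) : Prop :=
  ¬ ∃ k : ℕ, 0 < k ∧ k < n ∧ ∀ i : Fin n, (i : ℕ) < k → (σ i : ℕ) < k

/-!
Both sets are in bijection with the subsets `B` of `Fin n` containing `0` and `n - 1`.

In a noncrossing nonnesting partition two arcs over the same gap would cross, nest or share an
endpoint, and indecomposability provides an arc over every gap; so each gap is covered by exactly
one arc. Following these arcs from `0` shows that they form a single chain from `0` to `n - 1`: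
the partition is `B` together with singletons.

A 321-avoiding permutation is increasing on its excedances and on its other points. With
`B = {i | i < σ i} ∪ {n - 1}`, indecomposability forbids `σ i` to fall short of the next point of
`B` after an excedance `i`, and 3412-avoidance forbids it to overshoot; the other points are then
sent increasingly onto the remaining values. Hence `σ` climbs along `B` and descends along its
complement, and conversely this permutation avoids both patterns and is indecomposable.
-/

open Finset

theorem Finpartition.eq_of_forall_part_eq {α : Type*} [DecidableEq α] {s : Finset α}
    {P Q : Finpartition s} (h : ∀ a, P.part a = Q.part a) : P = Q := by
  ext t
  constructor <;> intro ht
  · obtain ⟨a, ha, rfl⟩ := P.part_surjOn ht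
    exact h a ▸ Q.part_mem.2 ha
  · obtain ⟨a, ha, rfl⟩ := Q.part_surjOn ht
    exact (h a).symm ▸ P.part_mem.2 ha

theorem Finset.image_compl_of_bijective {α β : Type*} [Fintype α] [Fintype β] [DecidableEq α]
    [DecidableEq β] {f : α → β} (hf : Function.Bijective f) (s : Finset α) :
    sᶜ.image f = (s.image f)ᶜ :=
  coe_injective (by push_cast; exact Set.image_compl_eq hf)

theorem StrictMonoOn.eqOn_of_image_eq {α β : Type*} [LinearOrder α] [LinearOrder β]
    [DecidableEq β] {s : Finset α} {f g : α → β} (hf : StrictMonoOn f s) (hg : StrictMonoOn g s)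
    (h : s.image f = s.image g) : Set.EqOn f g s := by
  set e := s.orderEmbOfFin rfl
  have he : ∀ i, e i ∈ s := s.orderEmbOfFin_mem rfl
  have hcard : #(s.image g) = #s := card_image_of_injOn hg.injOn
  have hfe : f ∘ e = (s.image g).orderEmbOfFin hcard :=
    orderEmbOfFin_unique hcard (fun i => h ▸ mem_image_of_mem f (he i))
      fun i j hij => hf (he i) (he j) (e.strictMono hij)
  have hge : g ∘ e = (s.image g).orderEmbOfFin hcard :=
    orderEmbOfFin_unique hcard (fun i => mem_image_of_mem g (he i))
      fun i j hij => hg (he i) (he j) (e.strictMono hij)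
  intro x hx
  obtain ⟨i, rfl⟩ : x ∈ Set.range e := by rwa [range_orderEmbOfFin]
  exact congrFun (hfe.trans hge.symm) i

theorem Equiv.Perm.card_filter_apply_mem {α : Type*} [Fintype α] [DecidableEq α]
    (σ : Equiv.Perm α) (s : Finset α) : #{x | σ x ∈ s} = #s := by
  rw [← card_map σ.symm.toEmbedding (s := s)]
  congr 1
  ext x
  simp

section Arcs

variable {n : ℕ} {P : Finpartition (univ : Finset (Fin n))} {g : ℕ} {i j k x y : Fin n}

theorem sameBlock_iff_mem_part : SameBlock P i j ↔ i ∈ P.part j :=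
  P.mem_part_iff_exists.symm

theorem SameBlock.refl (P : Finpartition (univ : Finset (Fin n))) (i : Fin n) :
    SameBlock P i i :=
  sameBlock_iff_mem_part.2 (P.mem_part (mem_univ i))

theorem SameBlock.symm (h : SameBlock P i j) : SameBlock P j i :=
  let ⟨b, hb, hi, hj⟩ := h
  ⟨b, hb, hj, hi⟩

theorem SameBlock.trans (h₁ : SameBlock P i j) (h₂ : SameBlock P j k) : SameBlock P i k := by
  obtain ⟨b, hb, hib, hjb⟩ := h₁
  obtain ⟨c, hc, hjc, hkc⟩ := h₂
  exact ⟨b, hb, hib, P.eq_of_mem_parts hc hb hjc hjb ▸ hkc⟩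

theorem eq_of_sameBlock_iff {Q : Finpartition (univ : Finset (Fin n))}
    (h : ∀ i j, SameBlock P i j ↔ SameBlock Q i j) : P = Q :=
  Finpartition.eq_of_forall_part_eq fun a => by
    ext i
    rw [← sameBlock_iff_mem_part, ← sameBlock_iff_mem_part, h]

theorem IsArc.right_unique {j₁ j₂ : Fin n} (h₁ : IsArc P i j₁) (h₂ : IsArc P i j₂) : j₁ = j₂ := by
  rcases lt_trichotomy j₁ j₂ with hj | hj | hj
  · exact absurd h₁.2.1 (h₂.2.2 j₁ h₁.1 hj)
  · exact hj
  · exact absurd h₂.2.1 (h₁.2.2 j₂ h₂.1 hj)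

/-- `(i, j)` is an arc of `P` passing over the gap between the points `g - 1` and `g`. -/
def IsArcOver (P : Finpartition (univ : Finset (Fin n))) (g : ℕ) (i j : Fin n) : Prop :=
  IsArc P i j ∧ (i : ℕ) < g ∧ g ≤ (j : ℕ)

theorem exists_isArcOver_of_sameBlock (h : SameBlock P x y) (hx : (x : ℕ) < g)
    (hy : g ≤ (y : ℕ)) : ∃ i j, IsArcOver P g i j ∧ SameBlock P x i := by
  classical
  set L := (P.part x).filter fun z : Fin n => (z : ℕ) < g
  set R := (P.part x).filter fun z : Fin n => g ≤ (z : ℕ)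
  have hxL : x ∈ L := mem_filter.2 ⟨P.mem_part (mem_univ x), hx⟩
  have hyR : y ∈ R := mem_filter.2 ⟨sameBlock_iff_mem_part.1 h.symm, hy⟩
  have hi := mem_filter.1 (L.max'_mem ⟨x, hxL⟩)
  have hj := mem_filter.1 (R.min'_mem ⟨y, hyR⟩)
  have hxi : SameBlock P x (L.max' ⟨x, hxL⟩) := (sameBlock_iff_mem_part.2 hi.1).symm
  refine ⟨_, _, ⟨⟨?_, hxi.symm.trans (sameBlock_iff_mem_part.2 hj.1).symm, ?_⟩, hi.2, hj.2⟩, hxi⟩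
  · rw [Fin.lt_def]; omega
  · intro z hiz hzj hz
    have hzx : z ∈ P.part x := sameBlock_iff_mem_part.1 (hxi.trans hz).symm
    by_cases hzg : (z : ℕ) < g
    · exact hiz.not_ge (L.le_max' z (mem_filter.2 ⟨hzx, hzg⟩))
    · exact hzj.not_ge (R.min'_le z (mem_filter.2 ⟨hzx, not_lt.1 hzg⟩))

theorem IndecomposableP.exists_isArcOver (hP : IndecomposableP P) (hg : 0 < g) (hgn : g < n) :
    ∃ i j, IsArcOver P g i j := by
  by_contra! hno
  refine hP ⟨g, hg, hgn, fun b hb => ?_⟩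
  by_contra! hmixed
  obtain ⟨⟨y, hy, hgy⟩, ⟨x, hx, hxg⟩⟩ := hmixed
  obtain ⟨i, j, hij, -⟩ := exists_isArcOver_of_sameBlock ⟨b, hb, hx, hy⟩ hxg hgy
  exact hno i j hij

theorem IsArcOver.unique (hNC : Noncrossing P) (hNN : Nonnesting P) {i₁ j₁ i₂ j₂ : Fin n}
    (h₁ : IsArcOver P g i₁ j₁) (h₂ : IsArcOver P g i₂ j₂) : i₁ = i₂ ∧ j₁ = j₂ := by
  wlog hle : i₁ ≤ i₂ generalizing i₁ j₁ i₂ j₂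
  · exact (this h₂ h₁ (le_of_not_ge hle)).imp Eq.symm Eq.symm
  obtain rfl | hlt := hle.eq_or_lt
  · exact ⟨rfl, h₁.1.right_unique h₂.1⟩
  exfalso
  have h₂₁ : i₂ < j₁ := Fin.lt_def.2 (h₂.2.1.trans_le h₁.2.2)
  rcases lt_trichotomy j₁ j₂ with hj | rfl | hj
  · exact hNC ⟨i₁, j₁, i₂, j₂, h₁.1, h₂.1, hlt, h₂₁, hj⟩
  · exact h₁.1.2.2 i₂ hlt h₂₁ (h₁.1.2.1.trans h₂.1.2.1.symm)
  · exact hNN ⟨i₁, j₁, i₂, j₂, h₁.1, h₂.1, hlt, h₂.1.1, hj⟩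

end Arcs

section PartitionClassification

variable {m : ℕ} {P : Finpartition (univ : Finset (Fin (m + 1)))} {i j x y : Fin (m + 1)}

theorem sameBlock_zero_of_isArcOver (hNC : Noncrossing P) (hNN : Nonnesting P)
    (hP : IndecomposableP P) {g : ℕ} : IsArcOver P g i j → SameBlock P 0 i := by
  induction g generalizing i j with
  | zero => exact fun h => absurd h.2.1 (Nat.not_lt_zero _)
  | succ g ih =>
    intro h
    have hi := h.2.1
    have hj := h.2.2
    obtain rfl | hg := Nat.eq_zero_or_pos g
    · obtain rfl : i = 0 := Fin.ext (by simp only [Fin.val_zero]; omega)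
      exact .refl P 0
    obtain ⟨i₀, j₀, h₀⟩ := hP.exists_isArcOver hg (by have := j.isLt; omega)
    have := h₀.2.1
    have := h₀.2.2
    by_cases hig : (i : ℕ) < g
    · -- `(i, j)` also passes over the previous gap, where the arc is `(i₀, j₀)`
      rw [← (h₀.unique hNC hNN ⟨h.1, hig, by omega⟩).1]
      exact ih h₀
    · have hj₀ : (j₀ : ℕ) = g := by
        by_contra hne
        have := congrArg Fin.val (IsArcOver.unique hNC hNN ⟨h₀.1, by omega, by omega⟩ h).1
        omega
      obtain rfl : i = j₀ := Fin.ext (by omega)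
      exact (ih h₀).trans h₀.1.2.1

theorem sameBlock_zero_of_lt (hNC : Noncrossing P) (hNN : Nonnesting P)
    (hP : IndecomposableP P) (hxy : x < y) (h : SameBlock P x y) : SameBlock P 0 x := by
  obtain ⟨i, j, hij, hxi⟩ :=
    exists_isArcOver_of_sameBlock (g := x + 1) h (by omega) (Fin.lt_def.1 hxy)
  exact (sameBlock_zero_of_isArcOver hNC hNN hP hij).trans hxi.symm

theorem mem_part_zero_of_sameBlock (hNC : Noncrossing P) (hNN : Nonnesting P)
    (hP : IndecomposableP P) (hxy : x ≠ y) (h : SameBlock P x y) : x ∈ P.part 0 := by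
  refine sameBlock_iff_mem_part.1 (SameBlock.symm ?_)
  rcases hxy.lt_or_gt with hlt | hlt
  · exact sameBlock_zero_of_lt hNC hNN hP hlt h
  · exact (sameBlock_zero_of_lt hNC hNN hP hlt h.symm).trans h.symm

theorem last_mem_part_zero (hNC : Noncrossing P) (hNN : Nonnesting P) (hP : IndecomposableP P) :
    Fin.last m ∈ P.part 0 := by
  obtain rfl | hm := Nat.eq_zero_or_pos m
  · exact P.mem_part (mem_univ 0)
  obtain ⟨i, j, h⟩ := hP.exists_isArcOver hm (Nat.lt_succ_self m)
  have := h.2.2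
  obtain rfl : j = Fin.last m := Fin.ext (by have := j.isLt; simp only [Fin.val_last]; omega)
  exact sameBlock_iff_mem_part.1 ((sameBlock_zero_of_isArcOver hNC hNN hP h).trans h.1.2.1).symm

end PartitionClassification

section BlockPartition

variable {n : ℕ} {B : Finset (Fin n)} {a i j : Fin n}

open Classical in
noncomputable def blockPartition (B : Finset (Fin n)) : Finpartition (univ : Finset (Fin n)) :=
  Finpartition.ofSetoid (Setoid.ker fun i => if i ∈ B then none else some i)

theorem sameBlock_blockPartition : SameBlock (blockPartition B) i j ↔ i = j ∨ i ∈ B ∧ j ∈ B := by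
  classical
  rw [sameBlock_iff_mem_part, blockPartition, Finpartition.mem_part_ofSetoid_iff_rel,
    Setoid.ker_def]
  split_ifs <;> aesop

theorem blockPartition_part_of_mem (ha : a ∈ B) : (blockPartition B).part a = B := by
  ext x
  rw [← sameBlock_iff_mem_part, sameBlock_blockPartition]
  exact ⟨by rintro (rfl | ⟨hx, -⟩) <;> assumption, fun hx => .inr ⟨hx, ha⟩⟩

theorem IsArc.mem_of_blockPartition (h : IsArc (blockPartition B) i j) : i ∈ B ∧ j ∈ B :=
  (sameBlock_blockPartition.1 h.2.1).resolve_left h.1.ne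

theorem IsArc.le_of_blockPartition {i₂ j₂ : Fin n} (h₁ : IsArc (blockPartition B) i j)
    (h₂ : IsArc (blockPartition B) i₂ j₂) (hi : i < i₂) : j ≤ i₂ :=
  le_of_not_gt fun h => h₁.2.2 i₂ hi h
    (sameBlock_blockPartition.2 (.inr ⟨h₁.mem_of_blockPartition.1, h₂.mem_of_blockPartition.1⟩))

theorem noncrossing_blockPartition (B : Finset (Fin n)) : Noncrossing (blockPartition B) :=
  fun ⟨_, _, _, _, h₁, h₂, hi, hij, _⟩ => (h₁.le_of_blockPartition h₂ hi).not_gt hij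

theorem nonnesting_blockPartition (B : Finset (Fin n)) : Nonnesting (blockPartition B) :=
  fun ⟨_, _, _, _, h₁, h₂, hi, _, hj⟩ => (h₁.le_of_blockPartition h₂ hi).not_gt (h₂.1.trans hj)

end BlockPartition

section

variable {m : ℕ} {B : Finset (Fin (m + 1))}

theorem indecomposableP_blockPartition (h0 : 0 ∈ B) (hl : Fin.last m ∈ B) :
    IndecomposableP (blockPartition B) := by
  rintro ⟨k, hk0, hkm, hk⟩
  have hB := (blockPartition B).part_mem.2 (mem_univ 0)
  rw [blockPartition_part_of_mem h0] at hB
  rcases hk B hB with h | h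
  · have := h _ hl
    simp only [Fin.val_last] at this
    omega
  · have := h _ h0
    simp only [Fin.val_zero] at this
    omega

theorem eq_blockPartition_part_zero {P : Finpartition (univ : Finset (Fin (m + 1)))}
    (hNC : Noncrossing P) (hNN : Nonnesting P) (hP : IndecomposableP P) :
    P = blockPartition (P.part 0) := by
  refine eq_of_sameBlock_iff fun i j => ?_
  rw [sameBlock_blockPartition]
  constructor
  · intro h
    by_cases hij : i = j
    · exact .inl hij
    · exact .inr ⟨mem_part_zero_of_sameBlock hNC hNN hP hij h,
        mem_part_zero_of_sameBlock hNC hNN hP (Ne.symm hij) h.symm⟩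
  · rintro (rfl | ⟨hi, hj⟩)
    · exact .refl P i
    · exact (sameBlock_iff_mem_part.2 hi).trans (sameBlock_iff_mem_part.2 hj).symm

end

section UpDown

variable {m : ℕ} {B : Finset (Fin (m + 1))} {i x y : Fin (m + 1)}

/-- Climb along `B`, descend along its complement. An empty `sup` in `Fin (m + 1)` is `0`, so the
first point of the complement, or `Fin.last m` if there is none, is sent to `0`. -/
noncomputable def upDownFun (B : Finset (Fin (m + 1))) (i : Fin (m + 1)) : Fin (m + 1) :=
  if i ∈ B.erase (Fin.last m) then (B.filter (i < ·)).inf id else (Bᶜ.filter (· < i)).sup id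

theorem upDownFun_of_mem (hl : Fin.last m ∈ B) (hi : i ∈ B.erase (Fin.last m)) :
    upDownFun B i ∈ B ∧ i < upDownFun B i ∧ ∀ b ∈ B, i < b → upDownFun B i ≤ b := by
  have hi_lt : i < Fin.last m := (Fin.le_last i).lt_of_ne (mem_erase.1 hi).1
  rw [upDownFun, if_pos hi]
  obtain ⟨b, hb, hb_eq⟩ := exists_mem_eq_inf _ ⟨_, mem_filter.2 ⟨hl, hi_lt⟩⟩ id
  refine ⟨hb_eq ▸ (mem_filter.1 hb).1, (Finset.lt_inf_iff (show i < ⊤ from hi_lt)).2 fun c hc =>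
    (mem_filter.1 hc).2, fun c hc hic => inf_le (mem_filter.2 ⟨hc, hic⟩)⟩

theorem upDownFun_of_notMem (hi : i ∉ B.erase (Fin.last m)) :
    (upDownFun B i ∉ B ∨ upDownFun B i = 0) ∧ upDownFun B i ≤ i ∧
      ∀ c ∉ B, c < i → c ≤ upDownFun B i := by
  rw [upDownFun, if_neg hi]
  refine ⟨?_, Finset.sup_le fun c hc => (mem_filter.1 hc).2.le,
    fun c hc hci => le_sup (f := id) (mem_filter.2 ⟨mem_compl.2 hc, hci⟩)⟩
  rcases (Bᶜ.filter (· < i)).eq_empty_or_nonempty with h | h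
  · exact .inr (by rw [h]; rfl)
  · obtain ⟨c, hc, hc_eq⟩ := exists_mem_eq_sup _ h id
    exact .inl (hc_eq ▸ mem_compl.1 (mem_filter.1 hc).1)

theorem upDownFun_lt_of_notMem (h0 : 0 ∈ B) (hx : x ∉ B) : upDownFun B x < x := by
  rw [upDownFun, if_neg fun h => hx (mem_of_mem_erase h)]
  refine (Finset.sup_lt_iff (bot_lt_iff_ne_bot.2 ?_)).2 fun c hc => (mem_filter.1 hc).2
  rintro rfl
  exact hx h0

theorem upDownFun_lt_upDownFun (h0 : 0 ∈ B) (hl : Fin.last m ∈ B) (hxy : x < y)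
    (h : ¬(x ∈ B.erase (Fin.last m) ∧ y ∉ B.erase (Fin.last m))) :
    upDownFun B x < upDownFun B y := by
  by_cases hy : y ∈ B.erase (Fin.last m)
  · have hy' := upDownFun_of_mem hl hy
    by_cases hx : x ∈ B.erase (Fin.last m)
    · exact ((upDownFun_of_mem hl hx).2.2 y (mem_of_mem_erase hy) hxy).trans_lt hy'.2.1
    · exact ((upDownFun_of_notMem hx).2.1.trans_lt hxy).trans hy'.2.1
  · have hxB : x ∉ B := fun hxB =>
      h ⟨mem_erase.2 ⟨(hxy.trans_le (Fin.le_last y)).ne, hxB⟩, hy⟩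
    exact (upDownFun_lt_of_notMem h0 hxB).trans_le ((upDownFun_of_notMem hy).2.2 x hxB hxy)

theorem mem_erase_of_upDownFun_lt (h0 : 0 ∈ B) (hl : Fin.last m ∈ B) (hxy : x < y)
    (h : upDownFun B y < upDownFun B x) :
    x ∈ B.erase (Fin.last m) ∧ y ∉ B.erase (Fin.last m) := by
  by_contra hxy'
  exact h.not_gt (upDownFun_lt_upDownFun h0 hl hxy hxy')

theorem upDownFun_ne_of_lt (h0 : 0 ∈ B) (hl : Fin.last m ∈ B) (hxy : x < y) :
    upDownFun B x ≠ upDownFun B y := by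
  by_cases h : x ∈ B.erase (Fin.last m) ∧ y ∉ B.erase (Fin.last m)
  · obtain ⟨hxB, hlt, -⟩ := upDownFun_of_mem hl h.1
    rcases (upDownFun_of_notMem h.2).1 with hyB | hy0
    · exact fun heq => hyB (heq ▸ hxB)
    · exact fun heq => (Fin.zero_le x).not_gt (hy0 ▸ heq ▸ hlt)
  · exact (upDownFun_lt_upDownFun h0 hl hxy h).ne

theorem upDownFun_bijective (h0 : 0 ∈ B) (hl : Fin.last m ∈ B) :
    Function.Bijective (upDownFun B) := by
  refine Finite.injective_iff_bijective.1 fun x y heq => ?_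
  by_contra hne
  rcases lt_or_gt_of_ne hne with hxy | hxy
  exacts [upDownFun_ne_of_lt h0 hl hxy heq, upDownFun_ne_of_lt h0 hl hxy heq.symm]

noncomputable def upDownPerm (B : Finset (Fin (m + 1))) (h0 : 0 ∈ B) (hl : Fin.last m ∈ B) :
    Equiv.Perm (Fin (m + 1)) :=
  Equiv.ofBijective (upDownFun B) (upDownFun_bijective h0 hl)

@[simp]
theorem upDownPerm_apply (h0 : 0 ∈ B) (hl : Fin.last m ∈ B) (i : Fin (m + 1)) :
    upDownPerm B h0 hl i = upDownFun B i :=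
  rfl

theorem avoids321_upDownPerm (h0 : 0 ∈ B) (hl : Fin.last m ∈ B) :
    Avoids321 (upDownPerm B h0 hl) := by
  rintro ⟨i, j, k, hij, hjk, hkj, hji⟩
  simp only [upDownPerm_apply] at hkj hji
  exact (mem_erase_of_upDownFun_lt h0 hl hij hji).2 (mem_erase_of_upDownFun_lt h0 hl hjk hkj).1

theorem avoids3412_upDownPerm (h0 : 0 ∈ B) (hl : Fin.last m ∈ B) :
    Avoids3412 (upDownPerm B h0 hl) := by
  rintro ⟨i, j, k, l, hij, hjk, hkl, hkl', hli, hij'⟩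
  simp only [upDownPerm_apply] at hkl' hli hij'
  have hik := mem_erase_of_upDownFun_lt h0 hl (hij.trans hjk) (hkl'.trans hli)
  have hjl := mem_erase_of_upDownFun_lt h0 hl (hjk.trans hkl) (hli.trans hij')
  have hkB : k ∉ B := fun hkB => hik.2 (mem_erase.2 ⟨(hkl.trans_le (Fin.le_last l)).ne, hkB⟩)
  have hσi : upDownFun B i ≤ j := (upDownFun_of_mem hl hik.1).2.2 j (mem_of_mem_erase hjl.1) hij
  have hσl : k ≤ upDownFun B l := (upDownFun_of_notMem hjl.2).2.2 k hkB hkl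
  exact hli.not_ge (hσi.trans (hjk.le.trans hσl))

theorem indecomposableSigma_upDownPerm (h0 : 0 ∈ B) (hl : Fin.last m ∈ B) :
    IndecomposableSigma (upDownPerm B h0 hl) := by
  rintro ⟨k, hk0, hkm, hk⟩
  set L := B.filter fun x : Fin (m + 1) => (x : ℕ) < k
  have he := mem_filter.1 (L.max'_mem ⟨0, mem_filter.2 ⟨h0, hk0⟩⟩)
  have heU : L.max' _ ∈ B.erase (Fin.last m) :=
    mem_erase.2 ⟨fun h => by rw [h, Fin.val_last] at he; omega, he.1⟩
  obtain ⟨hσB, hlt, -⟩ := upDownFun_of_mem hl heU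
  exact hlt.not_ge (L.le_max' _ (mem_filter.2 ⟨hσB, hk _ he.2⟩))

def blockOfPerm (σ : Equiv.Perm (Fin (m + 1))) : Finset (Fin (m + 1)) :=
  insert (Fin.last m) (univ.filter fun i => i < σ i)

theorem blockOfPerm_upDownPerm (h0 : 0 ∈ B) (hl : Fin.last m ∈ B) :
    blockOfPerm (upDownPerm B h0 hl) = B := by
  ext x
  simp only [blockOfPerm, mem_insert, mem_filter_univ]
  constructor
  · rintro (rfl | hx)
    · exact hl
    · by_contra hxB
      exact lt_asymm hx (upDownFun_lt_of_notMem h0 hxB)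
  · intro hxB
    by_cases hxl : x = Fin.last m
    · exact .inl hxl
    · exact .inr (upDownFun_of_mem hl (mem_erase.2 ⟨hxl, hxB⟩)).2.1

end UpDown

section Avoidance

variable {n : ℕ} {σ : Equiv.Perm (Fin n)} {x y : Fin n}

theorem card_filter_apply_lt (σ : Equiv.Perm (Fin n)) (c : Fin n) : #{z | σ z < c} = c := by
  simpa using σ.card_filter_apply_mem (Iio c)

theorem card_filter_apply_le (σ : Equiv.Perm (Fin n)) (c : Fin n) : #{z | σ z ≤ c} = c + 1 := by
  simpa using σ.card_filter_apply_mem (Iic c)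

theorem card_filter_lt_and_apply_le (σ : Equiv.Perm (Fin n)) (c : Fin n) :
    #{z | c < z ∧ σ z ≤ c} = #{z | z ≤ c ∧ c < σ z} := by
  have := card_sdiff_comm (s := {z | σ z ≤ c}) (t := Iic c)
    (by rw [card_filter_apply_le, Fin.card_Iic])
  convert this using 2 <;> ext z <;> simp [and_comm]

theorem Avoids321.apply_lt_apply_of_le_apply (hσ : Avoids321 σ) (hxy : x < y) (hy : y ≤ σ y) :
    σ x < σ y := by
  refine lt_of_le_of_ne (le_of_not_gt fun hlt => ?_) (σ.injective.ne hxy.ne)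
  -- by 321-avoidance no `z > y` has `σ z < σ y`: too few positions remain for the values `< σ y`
  have hsub : ({z | σ z < σ y} : Finset _) ⊆ (Iio y).erase x := by
    intro z hz
    rw [mem_filter_univ] at hz
    refine mem_erase.2 ⟨by rintro rfl; exact lt_asymm hz hlt,
      mem_Iio.2 (lt_of_not_ge fun hyz => ?_)⟩
    rcases hyz.eq_or_lt with rfl | hyz
    · exact lt_irrefl _ hz
    · exact hσ ⟨x, y, z, hxy, hyz, hz, hlt⟩
  have := card_le_card hsub
  rw [card_filter_apply_lt, card_erase_of_mem (mem_Iio.2 hxy), Fin.card_Iio] at this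
  have := Fin.le_def.1 hy
  have := Fin.lt_def.1 hxy
  omega

theorem Avoids321.apply_lt_apply_of_apply_le (hσ : Avoids321 σ) (hxy : x < y) (hx : σ x ≤ x) :
    σ x < σ y := by
  refine lt_of_le_of_ne (le_of_not_gt fun hlt => ?_) (σ.injective.ne hxy.ne)
  -- by 321-avoidance every `z < x` has `σ z < σ x`: with `y`, more than `σ x` values below `σ x`
  have hsub : insert y (Iio x) ⊆ ({z | σ z < σ x} : Finset _) := by
    intro z hz
    rw [mem_filter_univ]
    rcases mem_insert.1 hz with rfl | hzx
    · exact hlt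
    · rw [mem_Iio] at hzx
      exact lt_of_le_of_ne (le_of_not_gt fun h => hσ ⟨z, x, y, hzx, hxy, hlt, h⟩)
        (σ.injective.ne hzx.ne)
  have := card_le_card hsub
  rw [card_filter_apply_lt, card_insert_of_notMem (by simpa using hxy.le), Fin.card_Iio] at this
  have := Fin.le_def.1 hx
  omega

end Avoidance

section PermClassification

variable {m : ℕ} {σ : Equiv.Perm (Fin (m + 1))} {i x : Fin (m + 1)}

theorem last_mem_blockOfPerm : Fin.last m ∈ blockOfPerm σ :=
  mem_insert_self _ _

theorem mem_erase_blockOfPerm : x ∈ (blockOfPerm σ).erase (Fin.last m) ↔ x < σ x := by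
  simp only [blockOfPerm, mem_erase, mem_insert, mem_filter_univ]
  constructor
  · rintro ⟨hx, rfl | hlt⟩
    exacts [absurd rfl hx, hlt]
  · exact fun h => ⟨(h.trans_le (Fin.le_last _)).ne, .inr h⟩

theorem zero_mem_blockOfPerm (hI : IndecomposableSigma σ) : 0 ∈ blockOfPerm σ := by
  obtain rfl | hm := Nat.eq_zero_or_pos m
  · exact last_mem_blockOfPerm
  refine mem_of_mem_erase (mem_erase_blockOfPerm.2 ((Fin.zero_le _).lt_of_ne fun h =>
    hI ⟨1, one_pos, by omega, fun i hi => ?_⟩))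
  obtain rfl : i = 0 := Fin.ext (by simp only [Fin.val_zero]; omega)
  simp [← h]

theorem upDownFun_blockOfPerm_le_apply (hA : Avoids321 σ) (hI : IndecomposableSigma σ)
    (hi : i < σ i) : upDownFun (blockOfPerm σ) i ≤ σ i := by
  obtain ⟨-, -, hmin⟩ := upDownFun_of_mem last_mem_blockOfPerm (mem_erase_blockOfPerm.2 hi)
  by_contra! hlt
  have := Fin.lt_def.1 hlt
  have := (upDownFun (blockOfPerm σ) i).isLt
  -- otherwise `σ` maps `{0, …, σ i}` into itself
  refine hI ⟨σ i + 1, by omega, by omega, fun x hx => ?_⟩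
  suffices σ x ≤ σ i by rw [Fin.le_def] at this; omega
  by_cases hxσ : x < σ x
  · rcases lt_trichotomy x i with hxi | rfl | hix
    · exact (hA.apply_lt_apply_of_le_apply hxi hi.le).le
    · exact le_rfl
    · have hxB := mem_of_mem_erase (mem_erase_blockOfPerm.2 hxσ)
      exact absurd ((hmin x hxB hix).trans (Fin.le_def.2 (by omega))) hlt.not_ge
  · exact (not_lt.1 hxσ).trans (Fin.le_def.2 (by omega))

theorem apply_le_upDownFun_blockOfPerm (hA : Avoids321 σ) (hB : Avoids3412 σ) (hi : i < σ i) :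
    σ i ≤ upDownFun (blockOfPerm σ) i := by
  obtain ⟨hjB, hij, -⟩ := upDownFun_of_mem last_mem_blockOfPerm (mem_erase_blockOfPerm.2 hi)
  set j := upDownFun (blockOfPerm σ) i
  by_contra! hji
  have hj : j < σ j :=
    mem_erase_blockOfPerm.1 (mem_erase.2 ⟨(hji.trans_le (Fin.le_last _)).ne, hjB⟩)
  have hσij : σ i < σ j := hA.apply_lt_apply_of_le_apply hij hj.le
  -- `i` and `j` are positions `≤ j` with values `> j`, so two positions `> j` have values `≤ j`
  have hcard : 1 < #{z | j < z ∧ σ z ≤ j} := by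
    rw [card_filter_lt_and_apply_le]
    refine lt_of_lt_of_le ?_ (card_le_card (s := {i, j}) ?_)
    · rw [card_pair hij.ne]
      exact one_lt_two
    · intro z
      simp only [mem_insert, mem_singleton, mem_filter_univ]
      rintro (rfl | rfl)
      exacts [⟨hij.le, hji⟩, ⟨le_rfl, hj⟩]
  have h3412 : ∀ k l, j < k ∧ σ k ≤ j → j < l ∧ σ l ≤ j → k < l → False := fun k l hk hl hkl =>
    hB ⟨i, j, k, l, hij, hk.1, hkl, hA.apply_lt_apply_of_apply_le hkl (hk.2.trans hk.1.le),
      hl.2.trans_lt hji, hσij⟩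
  obtain ⟨k, hk, l, hl, hkl⟩ := one_lt_card.1 hcard
  rw [mem_filter_univ] at hk hl
  rcases hkl.lt_or_gt with h | h
  exacts [h3412 k l hk hl h, h3412 l k hl hk h]

theorem upDownFun_blockOfPerm (hA : Avoids321 σ) (hB : Avoids3412 σ) (hI : IndecomposableSigma σ) :
    upDownFun (blockOfPerm σ) = σ := by
  set U := (blockOfPerm σ).erase (Fin.last m)
  have h0 := zero_mem_blockOfPerm hI
  have hU : Set.EqOn σ (upDownFun (blockOfPerm σ)) U := fun i hi =>
    have hi := mem_erase_blockOfPerm.1 hi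
    le_antisymm (apply_le_upDownFun_blockOfPerm hA hB hi) (upDownFun_blockOfPerm_le_apply hA hI hi)
  -- off `U` both maps are increasing, with the same image: the complement of that of `U`
  have hUc : Set.EqOn σ (upDownFun (blockOfPerm σ)) ↑Uᶜ := by
    refine StrictMonoOn.eqOn_of_image_eq (fun x hx y _ hxy => ?_) (fun x hx y _ hxy => ?_) ?_
    · refine hA.apply_lt_apply_of_apply_le hxy (not_lt.1 fun h => ?_)
      exact mem_compl.1 (mem_coe.1 hx) (mem_erase_blockOfPerm.2 h)
    · exact upDownFun_lt_upDownFun h0 last_mem_blockOfPerm hxy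
        fun h => mem_compl.1 (mem_coe.1 hx) h.1
    · rw [image_compl_of_bijective σ.bijective,
        image_compl_of_bijective (upDownFun_bijective h0 last_mem_blockOfPerm), image_congr hU]
  funext i
  by_cases hi : i ∈ U
  exacts [(hU hi).symm, (hUc (mem_compl.2 hi)).symm]

theorem upDownPerm_blockOfPerm (hA : Avoids321 σ) (hB : Avoids3412 σ)
    (hI : IndecomposableSigma σ) :
    upDownPerm (blockOfPerm σ) (zero_mem_blockOfPerm hI) last_mem_blockOfPerm = σ :=
  Equiv.ext (congrFun (upDownFun_blockOfPerm hA hB hI))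

end PermClassification

abbrev EndpointFinset (m : ℕ) := {B : Finset (Fin (m + 1)) // 0 ∈ B ∧ Fin.last m ∈ B}

noncomputable def endpointFinsetEquivPartition (m : ℕ) :
    EndpointFinset m ≃ {P : Finpartition (univ : Finset (Fin (m + 1))) //
      Noncrossing P ∧ Nonnesting P ∧ IndecomposableP P} where
  toFun B := ⟨blockPartition B.1, noncrossing_blockPartition B.1, nonnesting_blockPartition B.1,
    indecomposableP_blockPartition B.2.1 B.2.2⟩
  invFun P := ⟨P.1.part 0, P.1.mem_part (mem_univ 0), last_mem_part_zero P.2.1 P.2.2.1 P.2.2.2⟩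
  left_inv B := Subtype.ext (blockPartition_part_of_mem B.2.1)
  right_inv P := Subtype.ext (eq_blockPartition_part_zero P.2.1 P.2.2.1 P.2.2.2).symm

noncomputable def endpointFinsetEquivPerm (m : ℕ) :
    EndpointFinset m ≃ {σ : Equiv.Perm (Fin (m + 1)) //
      Avoids321 σ ∧ Avoids3412 σ ∧ IndecomposableSigma σ} where
  toFun B := ⟨upDownPerm B.1 B.2.1 B.2.2, avoids321_upDownPerm B.2.1 B.2.2,
    avoids3412_upDownPerm B.2.1 B.2.2, indecomposableSigma_upDownPerm B.2.1 B.2.2⟩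
  invFun σ := ⟨blockOfPerm σ.1, zero_mem_blockOfPerm σ.2.2.2, last_mem_blockOfPerm⟩
  left_inv B := Subtype.ext (blockOfPerm_upDownPerm B.2.1 B.2.2)
  right_inv σ := Subtype.ext (upDownPerm_blockOfPerm σ.2.1 σ.2.2.1 σ.2.2.2)

theorem stmt_14 (n : ℕ) (hn : 1 ≤ n) :
    ∃ f : {P : Finpartition (Finset.univ : Finset (Fin n)) //
            Noncrossing P ∧ Nonnesting P ∧ IndecomposableP P} →
          {σ : Equiv.Perm (Fin n) //
            Avoids321 σ ∧ Avoids3412 σ ∧ IndecomposableSigma σ},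
      Function.Bijective f ∧
        Nat.card {P : Finpartition (Finset.univ : Finset (Fin n)) //
            Noncrossing P ∧ Nonnesting P ∧ IndecomposableP P} =
          Nat.card {σ : Equiv.Perm (Fin n) //
            Avoids321 σ ∧ Avoids3412 σ ∧ IndecomposableSigma σ} := by
  obtain ⟨m, rfl⟩ : ∃ m, n = m + 1 := ⟨n - 1, by omega⟩
  let e := (endpointFinsetEquivPartition m).symm.trans (endpointFinsetEquivPerm m)
  exact ⟨e, e.bijective, Nat.card_congr e⟩
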